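/- arXiv:2209.00543 — 2 statements merged into one kernel-verified Lean document; each statement's English description precedes it below -/
import Mathlib

section
/- Let V₁ and V₂ be nonempty finite types, v* ∈ V₁, N ≥ 1, c > 0, and D a divergence on S(V₁) that is jointly convex. Let Q 0, …, Q N ∈ S(V₁) satisfy Q i (v*) > Q (i−1) (v*) for all 1 ≤ i ≤ N. Then there exists ε₀ > 0 such that: for every family R assigning to each 0 ≤ i ≤ N and v ∈ V₂ a distribution R i v ∈ S(V₁) with R i v (v*) = c · Q i (v*) for all i and v, every family of weights p 0, …, p N ∈ S(V₂), and every Ψ : V₂ → S(V₁), if ∑ v ∈ V₂, p i (v) · D (Ψ(v)) (R i v) ≤ ε₀ for every 0 ≤ i ≤ N, then the mixtures F i := ∑ v ∈ V₂, p i (v) • Ψ(v) satisfy F i (v*) > F (i−1) (v*) for all 1 ≤ i ≤ N. -/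
open scoped BigOperators

/-- A divergence on the probability simplex `stdSimplex ℝ W`: continuous (in the
subspace topology on the simplex), nonnegative, and vanishing exactly on the diagonal. -/
def IsDivergence {W : Type*} [Fintype W] (D : (W → ℝ) → (W → ℝ) → ℝ) : Prop :=
  ContinuousOn (fun pq : (W → ℝ) × (W → ℝ) => D pq.1 pq.2)
      (stdSimplex ℝ W ×ˢ stdSimplex ℝ W) ∧
    (∀ p ∈ stdSimplex ℝ W, ∀ q ∈ stdSimplex ℝ W, 0 ≤ D p q) ∧
    (∀ p ∈ stdSimplex ℝ W, ∀ q ∈ stdSimplex ℝ W, (D p q = 0 ↔ p = q))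

/-- `D` is jointly convex on the simplex. -/
def JointlyConvexDiv {W : Type*} [Fintype W] (D : (W → ℝ) → (W → ℝ) → ℝ) : Prop :=
  ∀ p₁ ∈ stdSimplex ℝ W, ∀ p₂ ∈ stdSimplex ℝ W, ∀ q₁ ∈ stdSimplex ℝ W,
    ∀ q₂ ∈ stdSimplex ℝ W, ∀ t ∈ Set.Icc (0 : ℝ) 1,
      D (t • p₁ + (1 - t) • p₂) (t • q₁ + (1 - t) • q₂) ≤
        t * D p₁ q₁ + (1 - t) * D p₂ q₂

/-! A divergence controls the distance uniformly on the compact simplex, and joint convexity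
(Jensen) passes embed-calibration to the mixtures `F i` and `∑ v, p i v • R i v`. The latter
has `v*`-coordinate exactly `c * Q i v*`, so `F i v*` lies within any prescribed distance of
`c * Q i v*`; taking that distance below half the smallest gap `c * (Q i v* - Q (i - 1) v*)`
preserves the strict increase. -/

open Topology

theorem Finset.exists_pos_forall_lt {ι : Type*} (s : Finset ι) {f : ι → ℝ}
    (hf : ∀ i ∈ s, 0 < f i) : ∃ δ > 0, ∀ i ∈ s, δ < f i := by
  have hsmall : ∀ᶠ δ in 𝓝[>] (0 : ℝ), ∀ i ∈ s, δ < f i :=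
    nhdsWithin_le_nhds <| (s.eventually_all).2 fun i hi => eventually_lt_nhds (hf i hi)
  exact (eventually_mem_nhdsWithin.and hsmall).exists

theorem IsDivergence.exists_forall_dist_lt {W : Type*} [Fintype W]
    {D : (W → ℝ) → (W → ℝ) → ℝ} (hD : IsDivergence D) {η : ℝ} (hη : 0 < η) :
    ∃ ε > 0, ∀ p ∈ stdSimplex ℝ W, ∀ q ∈ stdSimplex ℝ W, D p q ≤ ε → dist p q < η := by
  obtain ⟨hDcont, hDnonneg, hDzero⟩ := hD
  set K := (stdSimplex ℝ W ×ˢ stdSimplex ℝ W) ∩ {pq | η ≤ dist pq.1 pq.2}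
  have hK : IsCompact K :=
    ((isCompact_stdSimplex ℝ W).prod (isCompact_stdSimplex ℝ W)).inter_right
      (isClosed_le continuous_const (continuous_fst.dist continuous_snd))
  have hDpos : ∀ pq ∈ K, 0 < D pq.1 pq.2 := by
    rintro ⟨p, q⟩ ⟨⟨hp, hq⟩, hpq⟩
    refine (hDnonneg p hp q hq).lt_of_ne fun h => ?_
    have : dist p q = 0 := by rw [(hDzero p hp q hq).1 h.symm, dist_self]
    exact hη.not_ge (this ▸ hpq)
  obtain ⟨m, hm, hmK⟩ := hK.exists_forall_le' (hDcont.mono Set.inter_subset_left) hDpos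
  refine ⟨m / 2, half_pos hm, fun p hp q hq hle => ?_⟩
  by_contra! hfar
  linarith [hmK (p, q) ⟨⟨hp, hq⟩, hfar⟩]

theorem JointlyConvexDiv.convexOn {W : Type*} [Fintype W] {D : (W → ℝ) → (W → ℝ) → ℝ}
    (hD : JointlyConvexDiv D) :
    ConvexOn ℝ (stdSimplex ℝ W ×ˢ stdSimplex ℝ W) fun pq => D pq.1 pq.2 := by
  refine ⟨(convex_stdSimplex ℝ W).prod (convex_stdSimplex ℝ W), ?_⟩
  rintro ⟨p₁, q₁⟩ ⟨hp₁, hq₁⟩ ⟨p₂, q₂⟩ ⟨hp₂, hq₂⟩ a b ha hb hab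
  obtain rfl : b = 1 - a := by linarith
  simpa using hD p₁ hp₁ p₂ hp₂ q₁ hq₁ q₂ hq₂ a ⟨ha, by linarith⟩

theorem JointlyConvexDiv.le_sum_mul {W V : Type*} [Fintype W] [Fintype V]
    {D : (W → ℝ) → (W → ℝ) → ℝ} (hD : JointlyConvexDiv D) {p : V → ℝ}
    (hp : p ∈ stdSimplex ℝ V) {Ψ R : V → W → ℝ} (hΨ : ∀ v, Ψ v ∈ stdSimplex ℝ W)
    (hR : ∀ v, R v ∈ stdSimplex ℝ W) :
    D (∑ v, p v • Ψ v) (∑ v, p v • R v) ≤ ∑ v, p v * D (Ψ v) (R v) := by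
  simpa [Prod.fst_sum, Prod.snd_sum] using hD.convexOn.map_sum_le (t := Finset.univ) (w := p)
    (p := fun v => (Ψ v, R v)) (fun v _ => hp.1 v) hp.2 fun v _ => ⟨hΨ v, hR v⟩

theorem sum_smul_mem_stdSimplex {W V : Type*} [Fintype W] [Fintype V] {p : V → ℝ}
    (hp : p ∈ stdSimplex ℝ V) {Ψ : V → W → ℝ} (hΨ : ∀ v, Ψ v ∈ stdSimplex ℝ W) :
    ∑ v, p v • Ψ v ∈ stdSimplex ℝ W :=
  (convex_stdSimplex ℝ W).sum_mem (fun v _ => hp.1 v) hp.2 fun v _ => hΨ v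

theorem sum_smul_apply_of_forall_apply_eq {W V : Type*} [Fintype V] {p : V → ℝ}
    (hp : ∑ v, p v = 1) {R : V → W → ℝ} {w : W} {a : ℝ} (hR : ∀ v, R v w = a) :
    (∑ v, p v • R v) w = a := by
  simp only [Finset.sum_apply, Pi.smul_apply, smul_eq_mul, hR, ← Finset.sum_mul, hp, one_mul]

theorem abs_sum_smul_apply_sub_lt {W V : Type*} [Fintype W] [Fintype V]
    {D : (W → ℝ) → (W → ℝ) → ℝ} (hD : JointlyConvexDiv D) {ε η : ℝ}
    (hε : ∀ p ∈ stdSimplex ℝ W, ∀ q ∈ stdSimplex ℝ W, D p q ≤ ε → dist p q < η)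
    {p : V → ℝ} (hp : p ∈ stdSimplex ℝ V) {Ψ R : V → W → ℝ} (hΨ : ∀ v, Ψ v ∈ stdSimplex ℝ W)
    (hR : ∀ v, R v ∈ stdSimplex ℝ W) {w : W} {a : ℝ} (hRw : ∀ v, R v w = a)
    (hcal : ∑ v, p v * D (Ψ v) (R v) ≤ ε) :
    |(∑ v, p v • Ψ v) w - a| < η := by
  have hclose := hε _ (sum_smul_mem_stdSimplex hp hΨ) _ (sum_smul_mem_stdSimplex hp hR)
    ((hD.le_sum_mul hp hΨ hR).trans hcal)
  rw [← sum_smul_apply_of_forall_apply_eq hp.2 hRw, ← Real.dist_eq]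
  exact (dist_le_pi_dist _ _ w).trans_lt hclose

theorem multiple_evidence_universe_to_scientist_general
    {V₁ V₂ : Type*} [Fintype V₁] [Fintype V₂]
    (vstar : V₁) (N : ℕ) (c : ℝ) (hc : 0 < c)
    (D : (V₁ → ℝ) → (V₁ → ℝ) → ℝ) (hD : IsDivergence D) (hDconv : JointlyConvexDiv D)
    (Q : ℕ → V₁ → ℝ) (hmono : ∀ i, 1 ≤ i → i ≤ N → Q (i - 1) vstar < Q i vstar) :
    ∃ ε₀ : ℝ, 0 < ε₀ ∧
      ∀ (R : ℕ → V₂ → V₁ → ℝ) (p : ℕ → V₂ → ℝ) (Ψ : V₂ → V₁ → ℝ),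
        (∀ i ≤ N, ∀ v : V₂, R i v ∈ stdSimplex ℝ V₁) →
        (∀ i ≤ N, ∀ v : V₂, R i v vstar = c * Q i vstar) →
        (∀ i ≤ N, p i ∈ stdSimplex ℝ V₂) →
        (∀ v : V₂, Ψ v ∈ stdSimplex ℝ V₁) →
        (∀ i ≤ N, ∑ v : V₂, p i v * D (Ψ v) (R i v) ≤ ε₀) →
        ∀ i, 1 ≤ i → i ≤ N →
          (∑ v : V₂, p (i - 1) v • Ψ v) vstar < (∑ v : V₂, p i v • Ψ v) vstar := by
  have hgap : ∀ i ∈ Finset.Icc 1 N, 0 < c * (Q i vstar - Q (i - 1) vstar) := fun i hi =>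
    have hi := Finset.mem_Icc.1 hi
    mul_pos hc (sub_pos.2 (hmono i hi.1 hi.2))
  obtain ⟨δ, hδpos, hδ⟩ := (Finset.Icc 1 N).exists_pos_forall_lt hgap
  obtain ⟨ε, hεpos, hε⟩ := hD.exists_forall_dist_lt (half_pos hδpos)
  refine ⟨ε, hεpos, fun R p Ψ hR hRv hp hΨ hcal i hi₁ hi₂ => ?_⟩
  have hclose : ∀ j ≤ N, |(∑ v, p j v • Ψ v) vstar - c * Q j vstar| < δ / 2 := fun j hj =>
    abs_sum_smul_apply_sub_lt hDconv hε (hp j hj) hΨ (hR j hj) (hRv j hj) (hcal j hj)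
  have hi := abs_lt.1 (hclose i hi₂)
  have hi' := abs_lt.1 (hclose (i - 1) (i.sub_le 1 |>.trans hi₂))
  have hδi := hδ i (Finset.mem_Icc.2 ⟨hi₁, hi₂⟩)
  linarith [hi.1, hi'.2]

/-- **Converse multiple-lines-of-evidence proposition for an embedded scientist.**
If the universe's limit response distributions `Q 0, …, Q N` assign strictly increasing
probability to `vstar`, then there is `ε₀ > 0` such that: whenever the brain-state
conditioned distributions `R i v` satisfy `R i v vstar = c * Q i vstar` and the scientist
is embed-calibrated, i.e. `∑ v, p i v * D (Ψ v) (R i v) ≤ ε₀`, the scientist's embedded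
prediction distributions `F i = ∑ v, p i v • Ψ v` assign strictly increasing probability
to `vstar`. -/
theorem multiple_evidence_universe_to_scientist
    {V₁ V₂ : Type*} [Fintype V₁] [Nonempty V₁] [Fintype V₂] [Nonempty V₂]
    (vstar : V₁) (N : ℕ) (hN : 1 ≤ N) (c : ℝ) (hc : 0 < c)
    (D : (V₁ → ℝ) → (V₁ → ℝ) → ℝ) (hD : IsDivergence D) (hDconv : JointlyConvexDiv D)
    (Q : ℕ → V₁ → ℝ) (hQ : ∀ i ≤ N, Q i ∈ stdSimplex ℝ V₁)
    (hmono : ∀ i, 1 ≤ i → i ≤ N → Q (i - 1) vstar < Q i vstar) :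
    ∃ ε₀ : ℝ, 0 < ε₀ ∧
      ∀ (R : ℕ → V₂ → V₁ → ℝ) (p : ℕ → V₂ → ℝ) (Ψ : V₂ → V₁ → ℝ),
        (∀ i ≤ N, ∀ v : V₂, R i v ∈ stdSimplex ℝ V₁) →
        (∀ i ≤ N, ∀ v : V₂, R i v vstar = c * Q i vstar) →
        (∀ i ≤ N, p i ∈ stdSimplex ℝ V₂) →
        (∀ v : V₂, Ψ v ∈ stdSimplex ℝ V₁) →
        (∀ i ≤ N, ∑ v : V₂, p i v * D (Ψ v) (R i v) ≤ ε₀) →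
        ∀ i, 1 ≤ i → i ≤ N →
          (∑ v : V₂, p (i - 1) v • Ψ v) vstar < (∑ v : V₂, p i v • Ψ v) vstar :=
  multiple_evidence_universe_to_scientist_general vstar N c hc D hD hDconv Q hmono
end

section
/- Let V be a nonempty finite type, v*, v† ∈ V, and α > 1 a real number. Let D₁ be a divergence on S(V) and D₂ a divergence on S(V × V). Fix J ∈ S(V × V) and M₁, M₂ ∈ S(V) with M₁(v*) > 0, M₂(v†) > 0, and the abductive factorization J(v*, v†) = α · M₁(v*) · M₂(v†). Then there exists ε₀ > 0 such that for all F_J ∈ S(V × V) and F₁, F₂ ∈ S(V) satisfying D₂ F_J J ≤ ε₀, D₁ F₁ M₁ ≤ ε₀, D₁ F₂ M₂ ≤ ε₀, F₁(v*) > 0, and the marginal condition ∑ u ∈ V, F_J(v*, u) = F₁(v*), one has F_J(v*, v†)/F₁(v*) > F₂(v†). -/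
open scoped BigOperators

/-!
The gap `J(v*, v†) - M₁(v*) M₂(v†) = (α - 1) M₁(v*) M₂(v†)` is positive, so the strict inequality
`F₂(v†) F₁(v*) < F_J(v*, v†)` survives small perturbations of the three distributions.
Small divergence forces small distance: on the compact part of the simplex at distance `≥ δ`
from `q`, the continuous function `D · q` is positive and hence bounded below by a positive
constant.
-/

namespace IsDivergence

variable {W : Type*} [Fintype W] {D : (W → ℝ) → (W → ℝ) → ℝ}

theorem continuousOn_left (hD : IsDivergence D) {q : W → ℝ} (hq : q ∈ stdSimplex ℝ W) :
    ContinuousOn (fun p => D p q) (stdSimplex ℝ W) :=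
  hD.1.comp (continuousOn_id.prodMk continuousOn_const) fun _ hp => Set.mk_mem_prod hp hq

theorem pos_of_ne (hD : IsDivergence D) {p q : W → ℝ} (hp : p ∈ stdSimplex ℝ W)
    (hq : q ∈ stdSimplex ℝ W) (hpq : p ≠ q) : 0 < D p q :=
  (hD.2.1 p hp q hq).lt_of_ne fun h => hpq ((hD.2.2 p hp q hq).mp h.symm)

theorem exists_pos_forall_dist_lt (hD : IsDivergence D) {q : W → ℝ} (hq : q ∈ stdSimplex ℝ W)
    {δ : ℝ} (hδ : 0 < δ) :
    ∃ ε > 0, ∀ p ∈ stdSimplex ℝ W, D p q ≤ ε → dist p q < δ := by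
  set K : Set (W → ℝ) := stdSimplex ℝ W ∩ {p | δ ≤ dist p q}
  have hK : IsCompact K :=
    (isCompact_stdSimplex ℝ W).inter_right (isClosed_le continuous_const (continuous_id.dist continuous_const))
  have hpos : ∀ p ∈ K, 0 < D p q := fun p hp =>
    hD.pos_of_ne hp.1 hq fun h => (hδ.trans_le hp.2).ne' (dist_eq_zero.mpr h)
  obtain ⟨m, hm, hmK⟩ :=
    hK.exists_forall_le' ((hD.continuousOn_left hq).mono Set.inter_subset_left) hpos
  refine ⟨m / 2, half_pos hm, fun p hp hpm => ?_⟩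
  by_contra! hfar
  linarith [hmK p ⟨hp, hfar⟩]

end IsDivergence

theorem exists_pos_forall_mul_lt {a b c : ℝ} (h : c * b < a) :
    ∃ δ > 0, ∀ x y z : ℝ, dist x a < δ → dist y b < δ → dist z c < δ → z * y < x := by
  have hcont : Continuous fun p : ℝ × ℝ × ℝ => p.2.2 * p.2.1 := by fun_prop
  obtain ⟨δ, hδ, hball⟩ := Metric.eventually_nhds_iff.mp
    (hcont.continuousAt.eventually_lt (x₀ := (a, b, c)) continuous_fst.continuousAt h)
  exact ⟨δ, hδ, fun x y z hx hy hz => hball (y := (x, y, z)) (by simp [Prod.dist_eq, hx, hy, hz])⟩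

theorem abduction_science_general
    {V : Type*} [Fintype V]
    (vstar vdag : V) (α : ℝ) (hα : 1 < α)
    (D₁ : (V → ℝ) → (V → ℝ) → ℝ) (hD₁ : IsDivergence D₁)
    (D₂ : (V × V → ℝ) → (V × V → ℝ) → ℝ) (hD₂ : IsDivergence D₂)
    (J : V × V → ℝ) (hJ : J ∈ stdSimplex ℝ (V × V))
    (M₁ M₂ : V → ℝ) (hM₁ : M₁ ∈ stdSimplex ℝ V) (hM₂ : M₂ ∈ stdSimplex ℝ V)
    (hM₁pos : 0 < M₁ vstar) (hM₂pos : 0 < M₂ vdag)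
    (hfact : J (vstar, vdag) = α * M₁ vstar * M₂ vdag) :
    ∃ ε₀ : ℝ, 0 < ε₀ ∧
      ∀ FJ ∈ stdSimplex ℝ (V × V), ∀ F₁ ∈ stdSimplex ℝ V, ∀ F₂ ∈ stdSimplex ℝ V,
        D₂ FJ J ≤ ε₀ → D₁ F₁ M₁ ≤ ε₀ → D₁ F₂ M₂ ≤ ε₀ →
        0 < F₁ vstar → (∑ u : V, FJ (vstar, u)) = F₁ vstar →
        F₂ vdag < FJ (vstar, vdag) / F₁ vstar := by
  have hgap : M₂ vdag * M₁ vstar < J (vstar, vdag) := by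
    rw [hfact, mul_comm (M₂ vdag), mul_assoc]
    exact lt_mul_of_one_lt_left (mul_pos hM₁pos hM₂pos) hα
  obtain ⟨δ, hδ, hstable⟩ := exists_pos_forall_mul_lt hgap
  obtain ⟨εJ, hεJ, hcloseJ⟩ := hD₂.exists_pos_forall_dist_lt hJ hδ
  obtain ⟨ε₁, hε₁, hclose₁⟩ := hD₁.exists_pos_forall_dist_lt hM₁ hδ
  obtain ⟨ε₂, hε₂, hclose₂⟩ := hD₁.exists_pos_forall_dist_lt hM₂ hδ
  refine ⟨min εJ (min ε₁ ε₂), lt_min hεJ (lt_min hε₁ hε₂), ?_⟩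
  intro FJ hFJ F₁ hF₁ F₂ hF₂ hDJ hD₁F hD₂F hF₁pos _
  rw [lt_div_iff₀ hF₁pos]
  refine hstable _ _ _
    ((dist_le_pi_dist _ _ _).trans_lt (hcloseJ FJ hFJ (hDJ.trans (min_le_left _ _))))
    ((dist_le_pi_dist _ _ _).trans_lt (hclose₁ F₁ hF₁ (hD₁F.trans ?_)))
    ((dist_le_pi_dist _ _ _).trans_lt (hclose₂ F₂ hF₂ (hD₂F.trans ?_)))
  · exact (min_le_right _ _).trans (min_le_left _ _)
  · exact (min_le_right _ _).trans (min_le_right _ _)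

/-- **Abduction proposition for an embedded scientist.**
If the universe's limit response distributions satisfy the abductive factorization
`J(v*, v†) = α · M₁(v*) · M₂(v†)` with `α > 1`, then there is `ε₀ > 0` such that
any scientist prediction distributions `F_J, F₁, F₂` within divergence `ε₀` of
`J, M₁, M₂` and satisfying the marginal condition obey the abduction implication:
`F_J(v*, v†)/F₁(v*) > F₂(v†)`. -/
theorem abduction_science
    {V : Type*} [Fintype V] [Nonempty V]
    (vstar vdag : V) (α : ℝ) (hα : 1 < α)
    (D₁ : (V → ℝ) → (V → ℝ) → ℝ) (hD₁ : IsDivergence D₁)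
    (D₂ : (V × V → ℝ) → (V × V → ℝ) → ℝ) (hD₂ : IsDivergence D₂)
    (J : V × V → ℝ) (hJ : J ∈ stdSimplex ℝ (V × V))
    (M₁ M₂ : V → ℝ) (hM₁ : M₁ ∈ stdSimplex ℝ V) (hM₂ : M₂ ∈ stdSimplex ℝ V)
    (hM₁pos : 0 < M₁ vstar) (hM₂pos : 0 < M₂ vdag)
    (hfact : J (vstar, vdag) = α * M₁ vstar * M₂ vdag) :
    ∃ ε₀ : ℝ, 0 < ε₀ ∧
      ∀ FJ ∈ stdSimplex ℝ (V × V), ∀ F₁ ∈ stdSimplex ℝ V, ∀ F₂ ∈ stdSimplex ℝ V,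
        D₂ FJ J ≤ ε₀ → D₁ F₁ M₁ ≤ ε₀ → D₁ F₂ M₂ ≤ ε₀ →
        0 < F₁ vstar → (∑ u : V, FJ (vstar, u)) = F₁ vstar →
        F₂ vdag < FJ (vstar, vdag) / F₁ vstar :=
  abduction_science_general vstar vdag α hα D₁ hD₁ D₂ hD₂ J hJ M₁ M₂ hM₁ hM₂ hM₁pos hM₂pos hfact
end
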